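/- arXiv:1501.07446 — 4 statements merged into one kernel-verified Lean document; each statement's English description precedes it below -/
import Mathlib

section
/- Let a, b, k, l, g be integers with g ≥ 1, gcd(a,b) = 1 and gcd(k,l) = 1. Consider the chain complex of free abelian groups concentrated in degrees 0 to 3: 0 → ℤ →(c₃) ℤ² →(c₂) ℤ² →(c₁) ℤ → 0, where c₃ is given by the column vector (-l, k), c₂ by the matrix ((gka, gla), (gkb, glb)), and c₁ by the row vector (-b, a). Then the homology of this complex is ℤ/g in degree 1 and zero in all other degrees. -/
/-- The differential `c₁ : ℤ² → ℤ`, given by the row vector `(-b, a)`. -/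
abbrev c1Mat (a b : ℤ) : Matrix (Fin 1) (Fin 2) ℤ := !![-b, a]

/-- The differential `c₂ : ℤ² → ℤ²`, given by the matrix `((gka, gla), (gkb, glb))`. -/
abbrev c2Mat (a b k l g : ℤ) : Matrix (Fin 2) (Fin 2) ℤ :=
  !![g * k * a, g * l * a; g * k * b, g * l * b]

/-- The differential `c₃ : ℤ → ℤ²`, given by the column vector `(-l, k)`. -/
abbrev c3Mat (k l : ℤ) : Matrix (Fin 2) (Fin 1) ℤ := !![-l; k]

/-- Homology in degree 1: `ker c₁ / im c₂`. -/
abbrev H1 (a b k l g : ℤ) :=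
  LinearMap.ker (c1Mat a b).mulVecLin ⧸
    Submodule.comap (LinearMap.ker (c1Mat a b).mulVecLin).subtype
      (LinearMap.range (c2Mat a b k l g).mulVecLin)

/-- Homology in degree 2: `ker c₂ / im c₃`. -/
abbrev H2 (a b k l g : ℤ) :=
  LinearMap.ker (c2Mat a b k l g).mulVecLin ⧸
    Submodule.comap (LinearMap.ker (c2Mat a b k l g).mulVecLin).subtype
      (LinearMap.range (c3Mat k l).mulVecLin)

/-- Homology in degree 0: `ℤ / im c₁`. -/
abbrev H0 (a b : ℤ) := (Fin 1 → ℤ) ⧸ LinearMap.range (c1Mat a b).mulVecLin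

/-!
The differential `c₂` factors as `g • (a, b)ᵀ (k, l)`. Coprimality of `a, b` makes `t ↦ t • (a, b)`
an isomorphism of `ℤ` onto `ker c₁` and makes `c₁` surjective; coprimality of `k, l` makes
`(k, l) : ℤ² → ℤ` surjective with kernel `im c₃`, and `c₃` injective. Hence the 1-cycles are
`ℤ • (a, b)`, the 1-boundaries are `gℤ • (a, b)`, and for `g ≠ 0` the 2-cycles are
`ker (k, l) = im c₃`.
-/

open Matrix

theorem IsCoprime.exists_eq_mul_of_mul_eq_mul {R : Type*} [CommRing R] {a b x y : R}
    (h : IsCoprime a b) (hxy : b * x = a * y) : ∃ t, x = a * t ∧ y = b * t := by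
  obtain ⟨u, v, huv⟩ := h
  exact ⟨u * x + v * y, by linear_combination (-x) * huv + v * hxy,
    by linear_combination (-y) * huv - u * hxy⟩

section

variable {a b k l : ℤ}

theorem c1Mat_mulVec (x : Fin 2 → ℤ) : c1Mat a b *ᵥ x = ![-b * x 0 + a * x 1] := by
  ext i; fin_cases i; simp [mulVec, dotProduct]

theorem c2Mat_mulVec {g : ℤ} (x : Fin 2 → ℤ) :
    c2Mat a b k l g *ᵥ x = (g * (k * x 0 + l * x 1)) • ![a, b] := by
  ext i; fin_cases i <;> simp [mulVec, dotProduct] <;> ring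

theorem c3Mat_mulVec (t : Fin 1 → ℤ) : c3Mat k l *ᵥ t = t 0 • ![-l, k] := by
  ext i; fin_cases i <;> simp [mulVec, dotProduct, mul_comm]

theorem mem_ker_c1 (hab : IsCoprime a b) {x : Fin 2 → ℤ} :
    x ∈ LinearMap.ker (c1Mat a b).mulVecLin ↔ ∃ t : ℤ, x = t • ![a, b] := by
  simp only [LinearMap.mem_ker, mulVecLin_apply, c1Mat_mulVec]
  constructor
  · intro hx
    have hx : -b * x 0 + a * x 1 = 0 := by simpa using congrFun hx 0
    obtain ⟨t, h0, h1⟩ := hab.exists_eq_mul_of_mul_eq_mul (x := x 0) (y := x 1)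
      (by linear_combination -hx)
    exact ⟨t, by ext i; fin_cases i <;> simp [h0, h1, mul_comm]⟩
  · rintro ⟨t, rfl⟩
    ext i; fin_cases i; simp; ring

theorem mem_range_c2 {g : ℤ} (hkl : IsCoprime k l) {x : Fin 2 → ℤ} :
    x ∈ LinearMap.range (c2Mat a b k l g).mulVecLin ↔ ∃ s : ℤ, x = (g * s) • ![a, b] := by
  simp only [LinearMap.mem_range, mulVecLin_apply, c2Mat_mulVec]
  constructor
  · rintro ⟨v, rfl⟩
    exact ⟨_, rfl⟩
  · rintro ⟨s, rfl⟩
    obtain ⟨u, v, huv⟩ := hkl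
    refine ⟨![u * s, v * s], ?_⟩
    congr 2
    simp only [cons_val_zero, cons_val_one]
    linear_combination s * huv

theorem ker_c2_le_range_c3 {g : ℤ} (hg : g ≠ 0) (hab : IsCoprime a b) (hkl : IsCoprime k l) :
    LinearMap.ker (c2Mat a b k l g).mulVecLin ≤ LinearMap.range (c3Mat k l).mulVecLin := by
  intro x hx
  rw [LinearMap.mem_ker, mulVecLin_apply, c2Mat_mulVec, smul_eq_zero, mul_eq_zero,
    or_assoc] at hx
  have hkx : k * x 0 + l * x 1 = 0 :=
    (hx.resolve_left hg).resolve_right (IsCoprime.ne_zero (p := ![a, b]) hab)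
  obtain ⟨t, h0, h1⟩ := hkl.exists_eq_mul_of_mul_eq_mul (x := -x 1) (y := x 0)
    (by linear_combination -hkx)
  refine ⟨![-t], ?_⟩
  rw [mulVecLin_apply, c3Mat_mulVec]
  ext i; fin_cases i <;> simp <;> linarith

theorem range_c1_eq_top (hab : IsCoprime a b) : LinearMap.range (c1Mat a b).mulVecLin = ⊤ := by
  obtain ⟨u, v, huv⟩ := hab
  refine LinearMap.range_eq_top.mpr fun y => ⟨![-v * y 0, u * y 0], ?_⟩
  rw [mulVecLin_apply, c1Mat_mulVec]
  ext i; fin_cases i; simp; linear_combination y 0 * huv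

theorem ker_c3_eq_bot (hkl : IsCoprime k l) : LinearMap.ker (c3Mat k l).mulVecLin = ⊥ := by
  refine (Submodule.eq_bot_iff _).mpr fun t ht => ?_
  simp only [LinearMap.mem_ker, mulVecLin_apply, c3Mat_mulVec, smul_eq_zero] at ht
  have hlk : ![-l, k] ≠ 0 := IsCoprime.ne_zero (p := ![-l, k]) hkl.symm.neg_left
  ext i
  fin_cases i
  simpa [hlk] using ht

noncomputable def equivKerC1 (hab : IsCoprime a b) : ℤ ≃ₗ[ℤ] LinearMap.ker (c1Mat a b).mulVecLin :=
  LinearEquiv.ofBijective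
    ((LinearMap.toSpanSingleton ℤ _ ![a, b]).codRestrict _ fun t => (mem_ker_c1 hab).2 ⟨t, rfl⟩)
    ⟨fun s t hst => smul_left_injective ℤ (IsCoprime.ne_zero (p := ![a, b]) hab)
        (congrArg Subtype.val hst),
      fun x => by
        obtain ⟨t, ht⟩ := (mem_ker_c1 hab).1 x.2
        exact ⟨t, Subtype.ext ht.symm⟩⟩

@[simp]
theorem coe_equivKerC1_apply (hab : IsCoprime a b) (t : ℤ) :
    (equivKerC1 hab t : Fin 2 → ℤ) = t • ![a, b] :=
  rfl

theorem map_equivKerC1_span (hab : IsCoprime a b) (hkl : IsCoprime k l) (g : ℤ) :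
    (Submodule.span ℤ {g}).map (equivKerC1 hab : ℤ →ₗ[ℤ] _) =
      (LinearMap.range (c2Mat a b k l g).mulVecLin).comap
        (LinearMap.ker (c1Mat a b).mulVecLin).subtype := by
  ext x
  obtain ⟨t, rfl⟩ := (equivKerC1 hab).surjective x
  simp only [Submodule.map_equiv_eq_comap_symm, Submodule.mem_comap, Submodule.subtype_apply,
    mem_range_c2 hkl, coe_equivKerC1_apply, LinearEquiv.coe_coe, LinearEquiv.symm_apply_apply,
    Submodule.mem_span_singleton, smul_eq_mul,
    (smul_left_injective ℤ (IsCoprime.ne_zero (p := ![a, b]) hab)).eq_iff]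
  exact exists_congr fun s => by rw [mul_comm, eq_comm]

noncomputable def h1EquivZMod (hab : IsCoprime a b) (hkl : IsCoprime k l) (g : ℤ) :
    H1 a b k l g ≃+ ZMod g.natAbs :=
  (Submodule.Quotient.equiv _ _ (equivKerC1 hab) (map_equivKerC1_span hab hkl g)).symm.toAddEquiv
    |>.trans (Int.quotientSpanEquivZMod g).toAddEquiv

end

/-- For integers `a, b, k, l, g` with `g ≥ 1`, `gcd(a,b) = 1`, `gcd(k,l) = 1`, the homology
of the chain complex `0 → ℤ →(c₃) ℤ² →(c₂) ℤ² →(c₁) ℤ → 0` is `ℤ/g` in degree `1` and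
trivial in degrees `0`, `2` and `3`. -/
theorem stmt0 (a b k l g : ℤ) (hg : 1 ≤ g) (hab : Int.gcd a b = 1) (hkl : Int.gcd k l = 1) :
    Nonempty (H1 a b k l g ≃+ ZMod g.toNat) ∧
    Subsingleton (H0 a b) ∧
    Subsingleton (H2 a b k l g) ∧
    Subsingleton (LinearMap.ker (c3Mat k l).mulVecLin) := by
  rw [← Int.isCoprime_iff_gcd_eq_one] at hab hkl
  have hg_toNat : g.toNat = g.natAbs := by omega
  refine ⟨⟨hg_toNat ▸ h1EquivZMod hab hkl g⟩, ?_, ?_, ?_⟩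
  · rw [Submodule.Quotient.subsingleton_iff, range_c1_eq_top hab]
  · rw [Submodule.Quotient.subsingleton_iff, Submodule.comap_subtype_eq_top]
    exact ker_c2_le_range_c3 (by omega) hab hkl
  · rw [Submodule.subsingleton_iff_eq_bot, ker_c3_eq_bot hkl]
end

section
/- Let a, b, k, l, g be integers with g ≥ 1, gcd(a,b) = 1 and gcd(k,l) = 1. For the chain complex 0 → ℤ →(c₃) ℤ² →(c₂) ℤ² →(c₁) ℤ → 0 with c₃ = (-l, k)ᵀ, c₂ = ((gka, gla),(gkb, glb)), c₁ = (-b, a), the combinatorial Laplacians Δᵢ = cᵢᵀcᵢ + c_{i+1}c_{i+1}ᵀ satisfy det(Δ₃) = k²+l², det(Δ₂) = (a²+b²)·g²·(k²+l²)², det(Δ₁) = (a²+b²)²·g²·(k²+l²), and det(Δ₀) = a²+b². -/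
open Matrix
/-!
`c₂ = g · (a, b)ᵀ (k, l)` has rank one, while `c₁` and `c₃` are given by the perpendicular
vectors `(-b, a)` and `(-l, k)`. Hence `Δ₂` and `Δ₁` are sums of rank-one matrices `α uuᵀ + u⊥u⊥ᵀ`
with `u ⊥ u⊥` of equal length, whose determinant is `α |u|⁴`; `Δ₃` and `Δ₀` are `1 × 1` Gram
matrices.
-/

section RankOne

variable {R : Type*} [CommRing R]

theorem det_replicateRow_mul_replicateCol {ι n : Type*} [Unique ι] [DecidableEq ι] [Fintype ι]
    [Fintype n] (v w : n → R) : (replicateRow ι v * replicateCol ι w).det = v ⬝ᵥ w := by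
  simp [det_unique, mul_apply, dotProduct]

theorem transpose_mul_self_vecMulVec {m n : Type*} [Fintype m] (u : m → R) (v : n → R) :
    (vecMulVec u v)ᵀ * vecMulVec u v = (u ⬝ᵥ u) • vecMulVec v v := by
  rw [transpose_vecMulVec, vecMulVec_mul_vecMulVec, vecMulVec_smul]

theorem mul_transpose_self_vecMulVec {m n : Type*} [Fintype n] (u : m → R) (v : n → R) :
    vecMulVec u v * (vecMulVec u v)ᵀ = (v ⬝ᵥ v) • vecMulVec u u := by
  rw [transpose_vecMulVec, vecMulVec_mul_vecMulVec, vecMulVec_smul]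

theorem dotProduct_self_fin_two (x y : R) : ![x, y] ⬝ᵥ ![x, y] = x ^ 2 + y ^ 2 := by
  simp [dotProduct, Fin.sum_univ_two, sq]

/-- `(x, y)` and `(-y, x)` are eigenvectors, with eigenvalues `α (x² + y²)` and `x² + y²`. -/
theorem det_smul_vecMulVec_add_vecMulVec_perp (α x y : R) :
    (α • vecMulVec ![x, y] ![x, y] + vecMulVec ![-y, x] ![-y, x]).det
      = α * (x ^ 2 + y ^ 2) ^ 2 := by
  simp [det_fin_two]
  ring

end RankOne

theorem c1Mat_eq (a b : ℤ) : c1Mat a b = replicateRow (Fin 1) ![-b, a] := by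
  ext i j; fin_cases i; fin_cases j <;> rfl

theorem c3Mat_eq (k l : ℤ) : c3Mat k l = replicateCol (Fin 1) ![-l, k] := by
  ext i j; fin_cases i <;> fin_cases j <;> rfl

theorem c2Mat_eq (a b k l g : ℤ) : c2Mat a b k l g = g • vecMulVec ![a, b] ![k, l] := by
  ext i j; fin_cases i <;> fin_cases j <;> simp <;> ring

theorem transpose_c1Mat_mul_self (a b : ℤ) :
    (c1Mat a b)ᵀ * c1Mat a b = vecMulVec ![-b, a] ![-b, a] := by
  rw [c1Mat_eq, transpose_replicateRow]
  exact (vecMulVec_eq (Fin 1) _ _).symm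

theorem c3Mat_mul_transpose_self (k l : ℤ) :
    c3Mat k l * (c3Mat k l)ᵀ = vecMulVec ![-l, k] ![-l, k] := by
  rw [c3Mat_eq, transpose_replicateCol]
  exact (vecMulVec_eq (Fin 1) _ _).symm

theorem transpose_c2Mat_mul_self (a b k l g : ℤ) :
    (c2Mat a b k l g)ᵀ * c2Mat a b k l g
      = (g ^ 2 * (a ^ 2 + b ^ 2)) • vecMulVec ![k, l] ![k, l] := by
  rw [c2Mat_eq, transpose_smul, Matrix.smul_mul, Matrix.mul_smul, transpose_mul_self_vecMulVec,
    smul_smul, smul_smul, dotProduct_self_fin_two, ← sq]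

theorem c2Mat_mul_transpose_self (a b k l g : ℤ) :
    c2Mat a b k l g * (c2Mat a b k l g)ᵀ
      = (g ^ 2 * (k ^ 2 + l ^ 2)) • vecMulVec ![a, b] ![a, b] := by
  rw [c2Mat_eq, transpose_smul, Matrix.smul_mul, Matrix.mul_smul, mul_transpose_self_vecMulVec,
    smul_smul, smul_smul, dotProduct_self_fin_two, ← sq]

theorem stmt1_general (a b k l g : ℤ) :
    ((c3Mat k l)ᵀ * c3Mat k l).det = k ^ 2 + l ^ 2 ∧
    ((c2Mat a b k l g)ᵀ * c2Mat a b k l g + c3Mat k l * (c3Mat k l)ᵀ).det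
      = (a ^ 2 + b ^ 2) * g ^ 2 * (k ^ 2 + l ^ 2) ^ 2 ∧
    ((c1Mat a b)ᵀ * c1Mat a b + c2Mat a b k l g * (c2Mat a b k l g)ᵀ).det
      = (a ^ 2 + b ^ 2) ^ 2 * g ^ 2 * (k ^ 2 + l ^ 2) ∧
    (c1Mat a b * (c1Mat a b)ᵀ).det = a ^ 2 + b ^ 2 := by
  refine ⟨?_, ?_, ?_, ?_⟩
  · rw [c3Mat_eq, transpose_replicateCol, det_replicateRow_mul_replicateCol,
      dotProduct_self_fin_two, neg_sq, add_comm]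
  · rw [transpose_c2Mat_mul_self, c3Mat_mul_transpose_self,
      det_smul_vecMulVec_add_vecMulVec_perp]
    ring
  · rw [transpose_c1Mat_mul_self, c2Mat_mul_transpose_self, add_comm,
      det_smul_vecMulVec_add_vecMulVec_perp]
    ring
  · rw [c1Mat_eq, transpose_replicateRow, det_replicateRow_mul_replicateCol,
      dotProduct_self_fin_two, neg_sq, add_comm]

/-- For the chain complex `0 → ℤ →(c₃) ℤ² →(c₂) ℤ² →(c₁) ℤ → 0` with
`c₃ = (-l, k)ᵀ`, `c₂ = ((gka, gla), (gkb, glb))`, `c₁ = (-b, a)`, the combinatorial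
Laplacians `Δᵢ = cᵢᵀcᵢ + c_{i+1}c_{i+1}ᵀ` (with `c₀ = 0`, `c₄ = 0`) have determinants
`det Δ₃ = k² + l²`, `det Δ₂ = (a² + b²)·g²·(k² + l²)²`,
`det Δ₁ = (a² + b²)²·g²·(k² + l²)`, `det Δ₀ = a² + b²`. -/
theorem stmt1 (a b k l g : ℤ) (hg : 1 ≤ g) (hab : Int.gcd a b = 1) (hkl : Int.gcd k l = 1) :
    ((c3Mat k l)ᵀ * c3Mat k l).det = k ^ 2 + l ^ 2 ∧
    ((c2Mat a b k l g)ᵀ * c2Mat a b k l g + c3Mat k l * (c3Mat k l)ᵀ).det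
      = (a ^ 2 + b ^ 2) * g ^ 2 * (k ^ 2 + l ^ 2) ^ 2 ∧
    ((c1Mat a b)ᵀ * c1Mat a b + c2Mat a b k l g * (c2Mat a b k l g)ᵀ).det
      = (a ^ 2 + b ^ 2) ^ 2 * g ^ 2 * (k ^ 2 + l ^ 2) ∧
    (c1Mat a b * (c1Mat a b)ᵀ).det = a ^ 2 + b ^ 2 :=
  stmt1_general a b k l g
end

section
/- For the functions fₙ as in Lück's example, and for every λ ∈ (0, e^{-1}], the supremum over n ≥ 1 of fₙ(λ) equals 1/(-ln λ) + λ. -/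
/-!
Each `fₙ` lies below `g(λ) = 1/(-ln λ) + λ` on `(0, 1)`, and `fₙ = g` at `λ` for `n = ⌊-ln λ⌋`,
since then `e^{-2n} < λ ≤ e^{-n}`. The only branch where the bound is not immediate is the linear
interpolation on `[e^{-3n}, e^{-2n}]`: writing `λ = (1 - s) e^{-3n} + s e^{-2n}`, convexity of `exp`
gives `-ln λ ≤ (3 - s) n`, and `s (3 - s) ≤ 2` for `s ∈ [0, 1]`.
-/

/-- Lück's example function `fₙ : [0,1] → ℝ`, defined piecewise:
`fₙ(λ) = λ` for `0 ≤ λ ≤ e^{-3n}`; linear interpolation on `[e^{-3n}, e^{-2n}]`;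
`fₙ(λ) = 1/(-ln λ) + λ` on `[e^{-2n}, e^{-n}]`; constant `1/n + e^{-n}` on
`[e^{-n}, 1/n + e^{-n}]`; and `fₙ(λ) = λ` on `[1/n + e^{-n}, 1]`. -/
noncomputable def luckF (n : ℕ) (x : ℝ) : ℝ :=
  if x ≤ Real.exp (-(3 * n : ℝ)) then x
  else if x ≤ Real.exp (-(2 * n : ℝ)) then
    ((Real.exp (-(2 * n : ℝ)) - x) * Real.exp (-(3 * n : ℝ))
        + (x - Real.exp (-(3 * n : ℝ))) * (1 / (2 * n : ℝ) + Real.exp (-(2 * n : ℝ))))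
      / (Real.exp (-(2 * n : ℝ)) - Real.exp (-(3 * n : ℝ)))
  else if x ≤ Real.exp (-(n : ℝ)) then 1 / (-Real.log x) + x
  else if x ≤ 1 / (n : ℝ) + Real.exp (-(n : ℝ)) then 1 / (n : ℝ) + Real.exp (-(n : ℝ))
  else x

open Real

lemma neg_log_convexCombination_exp_le {s : ℝ} (hs0 : 0 ≤ s) (hs1 : s ≤ 1) (u v : ℝ) :
    -log ((1 - s) * exp u + s * exp v) ≤ -((1 - s) * u + s * v) := by
  have hconv := convexOn_exp.2 (Set.mem_univ u) (Set.mem_univ v) (sub_nonneg.2 hs1) hs0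
    (by ring)
  simp only [smul_eq_mul] at hconv
  rw [neg_le_neg_iff, le_log_iff_exp_le ((exp_pos _).trans_le hconv)]
  exact hconv

lemma linear_interpolation_eq_add {a b : ℝ} (hab : a ≠ b) (c x : ℝ) :
    ((b - x) * a + (x - a) * (c + b)) / (b - a) = x + (x - a) / (b - a) * c := by
  field_simp [sub_ne_zero.2 hab.symm]
  ring

lemma luckF_interpolation_le (n : ℕ) {x : ℝ} (ha : exp (-(3 * n : ℝ)) < x)
    (hb : x ≤ exp (-(2 * n : ℝ))) :
    ((exp (-(2 * n : ℝ)) - x) * exp (-(3 * n : ℝ))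
        + (x - exp (-(3 * n : ℝ))) * (1 / (2 * n : ℝ) + exp (-(2 * n : ℝ))))
      / (exp (-(2 * n : ℝ)) - exp (-(3 * n : ℝ))) ≤ 1 / (-log x) + x := by
  set a := exp (-(3 * n : ℝ))
  set b := exp (-(2 * n : ℝ))
  have hab : a < b := ha.trans_le hb
  have hn : (0 : ℝ) < n := by
    have := exp_lt_exp.1 hab
    linarith
  have hx0 : 0 < x := (exp_pos _).trans ha
  set s := (x - a) / (b - a) with hs
  have hs0 : 0 ≤ s := div_nonneg (by linarith) (by linarith)
  have hs1 : s ≤ 1 := (div_le_one (by linarith)).2 (by linarith)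
  have hx : x = (1 - s) * a + s * b := by
    rw [hs]
    field_simp [(sub_pos.2 hab).ne']
    ring
  have hlog_lower : 2 * n ≤ -log x := by
    linarith [(log_le_iff_le_exp hx0).2 hb]
  have hlog_upper : -log x ≤ (3 - s) * n := by
    have := neg_log_convexCombination_exp_le hs0 hs1 (-(3 * n : ℝ)) (-(2 * n : ℝ))
    rw [← hx] at this
    linarith
  rw [linear_interpolation_eq_add hab.ne, ← hs]
  suffices s * (1 / (2 * n)) ≤ 1 / (-log x) by linarith
  rw [mul_one_div, div_le_div_iff₀ (by positivity) (by linarith)]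
  nlinarith [mul_le_mul_of_nonneg_left hlog_upper hs0,
    mul_nonneg (mul_nonneg (sub_nonneg.2 hs1) (by linarith : (0 : ℝ) ≤ 2 - s)) hn.le]

lemma luckF_le (n : ℕ) {x : ℝ} (hx0 : 0 < x) (hx1 : x < 1) :
    luckF n x ≤ 1 / (-log x) + x := by
  have hL : 0 < -log x := neg_pos.2 (log_neg hx0 hx1)
  have hL_inv : 0 < 1 / (-log x) := by positivity
  unfold luckF
  split_ifs with h3 h2 h1
  · linarith
  · exact luckF_interpolation_le n (not_le.1 h3) h2
  · exact le_rfl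
  · have hlt : exp (-(n : ℝ)) < x := not_le.1 h1
    have hLn : -log x < n := by linarith [(lt_log_iff_exp_lt hx0).2 hlt]
    have : 1 / (n : ℝ) ≤ 1 / (-log x) := one_div_le_one_div_of_le hL hLn.le
    linarith
  · linarith

lemma luckF_eq_of_exp_lt_of_le (n : ℕ) {x : ℝ} (h2 : exp (-(2 * n : ℝ)) < x)
    (h1 : x ≤ exp (-(n : ℝ))) : luckF n x = 1 / (-log x) + x := by
  have h32 : exp (-(3 * n : ℝ)) ≤ exp (-(2 * n : ℝ)) :=
    exp_le_exp.2 (by linarith [n.cast_nonneg (α := ℝ)])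
  rw [luckF, if_neg (not_le.2 (h32.trans_lt h2)), if_neg (not_le.2 h2), if_pos h1]

/-- For every `λ ∈ (0, e^{-1}]`, the supremum over `n ≥ 1` of `fₙ(λ)` equals
`1/(-ln λ) + λ`. -/
theorem stmt4 (x : ℝ) (hx : x ∈ Set.Ioc (0 : ℝ) (Real.exp (-1))) :
    IsLUB {y : ℝ | ∃ n : ℕ, 1 ≤ n ∧ y = luckF n x} (1 / (-Real.log x) + x) := by
  obtain ⟨hx0, hx1⟩ := hx
  have hL : 1 ≤ -log x := by linarith [(log_le_iff_le_exp hx0).2 hx1]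
  set n := ⌊-log x⌋₊
  have hn : 1 ≤ n := Nat.le_floor (by exact_mod_cast hL)
  have hn_real : (1 : ℝ) ≤ n := by exact_mod_cast hn
  have hn_le : (n : ℝ) ≤ -log x := Nat.floor_le (by linarith)
  have hlt_succ : -log x < n + 1 := Nat.lt_floor_add_one _
  refine IsGreatest.isLUB ⟨⟨n, hn, (luckF_eq_of_exp_lt_of_le n ?_ ?_).symm⟩, ?_⟩
  · rw [← lt_log_iff_exp_lt hx0]
    linarith
  · rw [← log_le_iff_le_exp hx0]
    linarith
  · rintro _ ⟨m, -, rfl⟩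
    exact luckF_le m hx0 (hx1.trans_lt (exp_lt_one_iff.2 (by norm_num)))
end

section
/- For each n ≥ 1, the functions fₙ of Lück's example satisfy ∫₀¹ fₙ(λ)/λ dλ ≥ ln 2 + 1. -/
open MeasureTheory

/-!
`fₙ(λ) ≥ λ` everywhere and `fₙ(λ) = λ + 1/(-ln λ)` on `[e^{-2n}, e^{-n}]`, so on `(0,1)`
the integrand `fₙ(λ)/λ` dominates `1` plus `1/(λ · (-ln λ))` on `[e^{-2n}, e^{-n}]`.
Since `-ln(-ln λ)` is a primitive of the latter, its integral is `ln(2n) - ln n = ln 2`.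
The integrand is integrable because `fₙ(λ) = λ` near `0` and `fₙ ≤ 2` elsewhere.
-/

open Set Real

theorem continuousOn_one_div_mul_neg_log :
    ContinuousOn (fun x => 1 / (x * -log x)) (Ioo 0 1) := by
  refine continuousOn_const.div (continuousOn_id.mul (continuousOn_log.mono ?_).neg) ?_
  · exact fun x hx => hx.1.ne'
  · intro x hx
    exact mul_ne_zero hx.1.ne' (neg_ne_zero.mpr (log_neg hx.1 hx.2).ne)

theorem integral_one_div_mul_neg_log {a b : ℝ} (ha : 0 < a) (hab : a ≤ b) (hb : b < 1) :
    ∫ x in a..b, 1 / (x * -log x) = log (-log a) - log (-log b) := by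
  have hsub : uIcc a b ⊆ Ioo 0 1 := fun x hx => by
    rw [uIcc_of_le hab] at hx
    exact ⟨ha.trans_le hx.1, hx.2.trans_lt hb⟩
  rw [intervalIntegral.integral_eq_sub_of_hasDerivAt (f := fun x => -log (log x)) _
    (continuousOn_one_div_mul_neg_log.mono hsub).intervalIntegrable,
    log_neg_eq_log, log_neg_eq_log]
  · ring
  intro x hx
  obtain ⟨hx0, hx1⟩ := hsub hx
  refine (hasDerivAt_log_log hx0.ne' hx1.ne (by linarith)).neg.congr_deriv ?_
  have := (log_neg hx0 hx1).ne
  field_simp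

theorem integral_exp_neg_one_div_mul_neg_log {s t : ℝ} (hs : 0 < s) (hst : s ≤ t) :
    ∫ x in exp (-t)..exp (-s), 1 / (x * -log x) = log t - log s := by
  rw [integral_one_div_mul_neg_log (exp_pos _) (exp_le_exp.mpr (by linarith))
    (exp_lt_one_iff.mpr (by linarith)), log_exp, log_exp, neg_neg, neg_neg]

theorem le_luckF (n : ℕ) (x : ℝ) : x ≤ luckF n x := by
  unfold luckF
  split_ifs with h3n h2n h1n hconst
  · exact le_rfl
  · rw [not_le] at h3n
    rw [le_div_iff₀ (by linarith)]
    have : 0 ≤ (x - exp (-(3 * n : ℝ))) * (1 / (2 * n : ℝ)) :=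
      mul_nonneg (by linarith) (by positivity)
    linarith
  · have hx0 : 0 < x := (exp_pos _).trans (not_le.mp h2n)
    have : log x ≤ 0 := log_nonpos hx0.le (h1n.trans (exp_le_one_iff.mpr (by simp)))
    have : 0 ≤ 1 / -log x := one_div_nonneg.mpr (by linarith)
    linarith
  · exact hconst
  · exact le_rfl

theorem luckF_eq_of_mem_Ioc {n : ℕ} {x : ℝ}
    (hx : x ∈ Ioc (exp (-(2 * n : ℝ))) (exp (-(n : ℝ)))) : luckF n x = 1 / (-log x) + x := by
  have h3n : exp (-(3 * n : ℝ)) ≤ exp (-(2 * n : ℝ)) :=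
    exp_le_exp.mpr (by linarith [n.cast_nonneg (α := ℝ)])
  rw [luckF, if_neg (by linarith [hx.1]), if_neg (not_le.mpr hx.1), if_pos hx.2]

theorem luckF_le_two {n : ℕ} (hn : 1 ≤ n) {x : ℝ} (hx : x ≤ 1) : luckF n x ≤ 2 := by
  have hn1 : (1 : ℝ) ≤ n := by exact_mod_cast hn
  have hinv : 1 / (n : ℝ) ≤ 1 := by rw [div_le_one (by linarith)]; exact hn1
  have hexp : ∀ k : ℝ, 0 ≤ k → exp (-k) ≤ 1 :=
    fun _ hk => exp_le_one_iff.mpr (by linarith)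
  unfold luckF
  split_ifs with h3n h2n h1n
  · linarith
  · rw [not_le] at h3n
    have hB : 1 / (2 * n : ℝ) + exp (-(2 * n : ℝ)) ≤ 2 := by
      have : 1 / (2 * n : ℝ) ≤ 1 := by rw [div_le_one (by linarith)]; linarith
      linarith [hexp (2 * n) (by linarith)]
    rw [div_le_iff₀ (by linarith)]
    nlinarith [hexp (3 * n) (by linarith),
      mul_le_mul_of_nonneg_left hB (by linarith : 0 ≤ x - exp (-(3 * n : ℝ)))]
  · have hx0 : 0 < x := (exp_pos _).trans (not_le.mp h2n)
    have hlog : (n : ℝ) ≤ -log x := by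
      have := log_le_log hx0 h1n
      rw [log_exp] at this
      linarith
    have : 1 / -log x ≤ 1 / n := one_div_le_one_div_of_le (by linarith) hlog
    linarith
  · linarith [hexp n (by linarith)]
  · linarith

theorem luckF_div_le {n : ℕ} (hn : 1 ≤ n) {x : ℝ} (hx : x ∈ Ioo 0 1) :
    luckF n x / x ≤ 2 * exp (3 * n : ℝ) := by
  have hexp : 1 ≤ exp (3 * n : ℝ) := one_le_exp (by positivity)
  by_cases h3n : x ≤ exp (-(3 * n : ℝ))
  · rw [luckF, if_pos h3n, div_self hx.1.ne']
    linarith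
  calc luckF n x / x ≤ 2 / exp (-(3 * n : ℝ)) :=
        div_le_div₀ zero_le_two (luckF_le_two hn hx.2.le) (exp_pos _) (not_le.mp h3n).le
    _ = 2 * exp (3 * n : ℝ) := by rw [exp_neg, div_inv_eq_mul]

theorem measurable_luckF (n : ℕ) : Measurable (luckF n) := by
  unfold luckF
  refine Measurable.ite measurableSet_Iic measurable_id (Measurable.ite measurableSet_Iic
    (by fun_prop) (Measurable.ite measurableSet_Iic (by fun_prop) ?_))
  exact Measurable.ite measurableSet_Iic measurable_const measurable_id

theorem integrableOn_luckF_div {n : ℕ} (hn : 1 ≤ n) :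
    IntegrableOn (fun x => luckF n x / x) (Ioo 0 1) := by
  refine Measure.integrableOn_of_bounded (M := 2 * exp (3 * n : ℝ)) (by simp)
    ((measurable_luckF n).div measurable_id).aestronglyMeasurable ?_
  refine (ae_restrict_iff' measurableSet_Ioo).mpr (ae_of_all _ fun x hx => ?_)
  have hnonneg : 0 ≤ luckF n x / x := div_nonneg (hx.1.le.trans (le_luckF n x)) hx.1.le
  rw [norm_of_nonneg hnonneg]
  exact luckF_div_le hn hx

theorem one_add_indicator_le_luckF_div (n : ℕ) {x : ℝ} (hx : x ∈ Ioo 0 1) :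
    1 + (Ioc (exp (-(2 * n : ℝ))) (exp (-(n : ℝ)))).indicator (fun y => 1 / (y * -log y)) x
      ≤ luckF n x / x := by
  rw [le_div_iff₀ hx.1]
  by_cases hmem : x ∈ Ioc (exp (-(2 * n : ℝ))) (exp (-(n : ℝ)))
  · rw [indicator_of_mem hmem, luckF_eq_of_mem_Ioc hmem, add_mul, one_mul,
      one_div_mul_eq_div, div_mul_cancel_left₀ hx.1.ne', one_div, add_comm]
  · rw [indicator_of_notMem hmem, add_zero, one_mul]
    exact le_luckF n x

/-- For each `n ≥ 1`, `∫₀¹ fₙ(λ)/λ dλ ≥ ln 2 + 1`. -/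
theorem stmt6 (n : ℕ) (hn : 1 ≤ n) :
    Real.log 2 + 1 ≤ ∫ x in Set.Ioo (0 : ℝ) 1, luckF n x / x := by
  have hn0 : (0 : ℝ) < n := by exact_mod_cast hn
  set a := exp (-(2 * n : ℝ))
  set b := exp (-(n : ℝ))
  have hab : a ≤ b := exp_le_exp.mpr (by linarith)
  have hsub : Icc a b ⊆ Ioo 0 1 :=
    fun x hx => ⟨(exp_pos _).trans_le hx.1, hx.2.trans_lt (exp_lt_one_iff.mpr (by linarith))⟩
  have hind : IntegrableOn ((Ioc a b).indicator fun y => 1 / (y * -log y)) (Ioo 0 1) :=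
    (((continuousOn_one_div_mul_neg_log.mono hsub).integrableOn_Icc).mono_set
      Ioc_subset_Icc_self).integrable_indicator measurableSet_Ioc |>.integrableOn
  have hone : IntegrableOn (fun _ => (1 : ℝ)) (Ioo (0 : ℝ) 1) := integrableOn_const (by simp)
  have hlog : ∫ x in Ioc a b, 1 / (x * -log x) = log 2 := by
    rw [← intervalIntegral.integral_of_le hab,
      integral_exp_neg_one_div_mul_neg_log hn0 (by linarith), log_mul two_ne_zero hn0.ne']
    ring
  calc log 2 + 1
      = ∫ x in Ioo 0 1, 1 + (Ioc a b).indicator (fun y => 1 / (y * -log y)) x := by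
        rw [integral_add hone hind, setIntegral_indicator measurableSet_Ioc,
          inter_eq_self_of_subset_right (Ioc_subset_Icc_self.trans hsub), hlog]
        simp [add_comm]
    _ ≤ ∫ x in Ioo 0 1, luckF n x / x :=
        setIntegral_mono_on (hone.add hind) (integrableOn_luckF_div hn) measurableSet_Ioo
          fun x hx => one_add_indicator_le_luckF_div n hx
end
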